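/- arXiv:0712.4279 — 7 statements merged into one kernel-verified Lean document; each statement's English description precedes it below -/
import Mathlib

section
/- For any norm Φ on a finite-dimensional real inner product space, any sign vector A (entries in {-1,1}), and any real α ≥ 1, the α-approximation norm satisfies Φ^α(A) ≥ max_Q [(1+α)⟨A,Q⟩ + (1-α)‖Q‖₁] / (2 Φ*(Q)), where the maximum is over nonzero Q. -/
/-! With `c = A x * B x ∈ [1, α]` and `t = A x * Q x`, the summand `(1 + α) t + (1 - α) |t|` is
`2 t` or `2 α t` according to the sign of `t`, hence at most `2 c t = 2 B x Q x`. So the numerator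
is at most `2⟨B,Q⟩`, and `⟨B,Q⟩ ≤ Φ(B) Φ*(Q)` by testing the supremum defining `Φ*(Q)` at
`B / Φ(B)`. -/

lemma add_mul_add_sub_mul_abs_le {α c t : ℝ} (hc₁ : 1 ≤ c) (hcα : c ≤ α) :
    (1 + α) * t + (1 - α) * |t| ≤ 2 * (c * t) := by
  rcases le_or_gt 0 t with ht | ht
  · rw [abs_of_nonneg ht]; nlinarith
  · rw [abs_of_neg ht]; nlinarith

lemma sum_add_mul_add_sub_mul_abs_le {X : Type*} [Fintype X] {A B Q : X → ℝ} {α : ℝ}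
    (hA : ∀ x, A x = 1 ∨ A x = -1) (hB : ∀ x, 1 ≤ A x * B x ∧ A x * B x ≤ α) :
    (1 + α) * (∑ x, A x * Q x) + (1 - α) * (∑ x, |Q x|) ≤ 2 * ∑ x, B x * Q x := by
  simp only [Finset.mul_sum, ← Finset.sum_add_distrib]
  refine Finset.sum_le_sum fun x _ => ?_
  have hAQ : |Q x| = |A x * Q x| := by rcases hA x with h | h <;> simp [h]
  have hBQ : B x * Q x = (A x * B x) * (A x * Q x) := by rcases hA x with h | h <;> simp [h]
  rw [hAQ, hBQ]
  exact add_mul_add_sub_mul_abs_le (hB x).1 (hB x).2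

/-- `Φ*(Q)`, with the junk value `0` when the supremum is unbounded. -/
noncomputable def dualNorm {X : Type*} [Fintype X] (Φ : (X → ℝ) → ℝ) (Q : X → ℝ) : ℝ :=
  sSup {t : ℝ | ∃ B : X → ℝ, Φ B ≤ 1 ∧ t = |∑ x, B x * Q x|}

lemma dualNorm_nonneg {X : Type*} [Fintype X] (Φ : (X → ℝ) → ℝ) (Q : X → ℝ) :
    0 ≤ dualNorm Φ Q :=
  Real.sSup_nonneg fun _ ⟨_, _, ht⟩ => ht ▸ abs_nonneg _

lemma sum_mul_div_dualNorm_le {X : Type*} [Fintype X] {Φ : (X → ℝ) → ℝ}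
    (hΦ_smul : ∀ (c : ℝ) (f : X → ℝ), Φ (c • f) = |c| * Φ f) {B : X → ℝ} (hB : 0 < Φ B)
    (Q : X → ℝ) :
    (∑ x, B x * Q x) / dualNorm Φ Q ≤ Φ B := by
  set T := {t : ℝ | ∃ B : X → ℝ, Φ B ≤ 1 ∧ t = |∑ x, B x * Q x|}
  by_cases hbdd : BddAbove T
  swap
  · rw [dualNorm, Real.sSup_of_not_bddAbove hbdd, div_zero]
    exact hB.le
  refine div_le_of_le_mul₀ (dualNorm_nonneg Φ Q) hB.le ?_
  have hscaled : |∑ x, ((Φ B)⁻¹ • B) x * Q x| ∈ T :=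
    ⟨(Φ B)⁻¹ • B, by rw [hΦ_smul, abs_inv, abs_of_pos hB, inv_mul_cancel₀ hB.ne'], rfl⟩
  have hsum : ∑ x, ((Φ B)⁻¹ • B) x * Q x = (Φ B)⁻¹ * ∑ x, B x * Q x := by
    simp only [Finset.mul_sum, Pi.smul_apply, smul_eq_mul, mul_assoc]
  have hle := le_csSup hbdd hscaled
  rw [hsum, abs_mul, abs_inv, abs_of_pos hB, inv_mul_le_iff₀ hB] at hle
  exact (le_abs_self _).trans hle

theorem stmt2_general {X : Type*} [Fintype X] (Φ : (X → ℝ) → ℝ)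
    (hΦ_smul : ∀ (c : ℝ) (f : X → ℝ), Φ (c • f) = |c| * Φ f)
    (hΦ_pos : ∀ f : X → ℝ, f ≠ 0 → 0 < Φ f)
    (A : X → ℝ) (hA : ∀ x, A x = 1 ∨ A x = -1)
    (α : ℝ) (hα : 1 ≤ α)
    (Q : X → ℝ) :
    ((1 + α) * (∑ x, A x * Q x) + (1 - α) * (∑ x, |Q x|)) /
        (2 * sSup {t : ℝ | ∃ B : X → ℝ, Φ B ≤ 1 ∧ t = |∑ x, B x * Q x|})
      ≤ sInf {s : ℝ | ∃ B : X → ℝ, (∀ x, 1 ≤ A x * B x ∧ A x * B x ≤ α) ∧ s = Φ B} := by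
  have hA_feasible : ∀ x, 1 ≤ A x * A x ∧ A x * A x ≤ α := fun x => by
    rcases hA x with h | h <;> simp [h, hα]
  refine le_csInf ⟨Φ A, A, hA_feasible, rfl⟩ ?_
  rintro _ ⟨B, hB, rfl⟩
  change _ / (2 * dualNorm Φ Q) ≤ _
  calc _ ≤ 2 * (∑ x, B x * Q x) / (2 * dualNorm Φ Q) :=
        div_le_div_of_nonneg_right (sum_add_mul_add_sub_mul_abs_le hA hB)
          (mul_nonneg zero_le_two (dualNorm_nonneg Φ Q))
    _ = (∑ x, B x * Q x) / dualNorm Φ Q := mul_div_mul_left _ _ two_ne_zero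
    _ ≤ Φ B := by
        rcases eq_or_ne B 0 with rfl | hB0
        · have hΦ0 : Φ 0 = 0 := by simpa using hΦ_smul 0 0
          simp [hΦ0]
        · exact sum_mul_div_dualNorm_le hΦ_smul (hΦ_pos B hB0) Q

/-- For any norm `Φ` on `ℝ^X`, any sign vector `A`, and any `α ≥ 1`, the α-approximation
norm `Φ^α(A) = min { Φ B : 1 ≤ A∘B ≤ α }` satisfies
`Φ^α(A) ≥ ((1+α)⟨A,Q⟩ + (1-α)‖Q‖₁) / (2 Φ*(Q))` for every nonzero `Q`. -/
theorem stmt2 {X : Type*} [Fintype X] (Φ : (X → ℝ) → ℝ)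
    (hΦ_add : ∀ f g : X → ℝ, Φ (f + g) ≤ Φ f + Φ g)
    (hΦ_smul : ∀ (c : ℝ) (f : X → ℝ), Φ (c • f) = |c| * Φ f)
    (hΦ_pos : ∀ f : X → ℝ, f ≠ 0 → 0 < Φ f)
    (A : X → ℝ) (hA : ∀ x, A x = 1 ∨ A x = -1)
    (α : ℝ) (hα : 1 ≤ α)
    (Q : X → ℝ) (hQ : Q ≠ 0) :
    ((1 + α) * (∑ x, A x * Q x) + (1 - α) * (∑ x, |Q x|)) /
        (2 * sSup {t : ℝ | ∃ B : X → ℝ, Φ B ≤ 1 ∧ t = |∑ x, B x * Q x|})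
      ≤ sInf {s : ℝ | ∃ B : X → ℝ, (∀ x, 1 ≤ A x * B x ∧ A x * B x ≤ α) ∧ s = Φ B} :=
  stmt2_general Φ hΦ_smul hΦ_pos A hA α hα Q
end

section
/- If the randomized ε-error k-party NOF communication complexity of a sign tensor A is at most c, then for any α ≥ 1/(1-2ε), log₂ μ^α(A) ≤ c + log₂(1/(1-2ε)). -/
open scoped BigOperators

variable {ι : Type*} [Fintype ι] [DecidableEq ι] {X : ι → Type*} [∀ i, Fintype (X i)]

/-- A cylinder in dimension `i`: membership does not depend on the `i`-th coordinate. -/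
def IsCylinder (i : ι) (Z : Set (∀ j, X j)) : Prop :=
  ∀ z z' : ∀ j, X j, (∀ j, j ≠ i → z j = z' j) → z ∈ Z → z' ∈ Z

/-- A cylinder intersection: an intersection of cylinders, one in each dimension. -/
def IsCylinderIntersection (Z : Set (∀ j, X j)) : Prop :=
  ∃ C : ι → Set (∀ j, X j), (∀ i, IsCylinder i (C i)) ∧ Z = ⋂ i, C i

/-- The dual cylinder intersection norm `μ*(Q) = max_Z |⟨Q, χ(Z)⟩|`. -/
noncomputable def mustar (Q : (∀ j, X j) → ℝ) : ℝ :=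
  sSup {r : ℝ | ∃ Z : Set (∀ j, X j), IsCylinderIntersection Z ∧
    r = |∑ x, Q x * Z.indicator 1 x|}

/-- The cylinder intersection norm `μ(B) = min { Σ|α_i| : B = Σ α_i χ(Z_i) }`. -/
noncomputable def mu (B : (∀ j, X j) → ℝ) : ℝ :=
  sInf {s : ℝ | ∃ (n : ℕ) (α : Fin n → ℝ) (Z : Fin n → Set (∀ j, X j)),
    (∀ t, IsCylinderIntersection (Z t)) ∧
    (∀ x, B x = ∑ t, α t * (Z t).indicator 1 x) ∧ s = ∑ t, |α t|}

/-- The approximate cylinder intersection norm `μ^∞(A) = min { μ(B) : 1 ≤ A∘B }`. -/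
noncomputable def muInf (A : (∀ j, X j) → ℝ) : ℝ :=
  sInf {s : ℝ | ∃ B : (∀ j, X j) → ℝ, (∀ x, 1 ≤ A x * B x) ∧ s = mu B}

/-- `μ^α(A) = min { μ(B) : 1 ≤ A∘B ≤ α }`. -/
noncomputable def muAlpha (A : (∀ j, X j) → ℝ) (α : ℝ) : ℝ :=
  sInf {s : ℝ | ∃ B : (∀ j, X j) → ℝ, (∀ x, 1 ≤ A x * B x ∧ A x * B x ≤ α) ∧ s = mu B}

/-! Each `A'ᵢ` is a `±1`-combination of the indicators of its `2 ^ c` cylinder intersections, so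
`B = (∑ pᵢ A'ᵢ) / (1 - 2ε)` has `μ(B) ≤ 2 ^ c / (1 - 2ε)`. Since `∑ pᵢ A'ᵢ` is `2ε`-close to the
sign tensor `A` and bounded by `1`, every entry of `A ∘ (∑ pᵢ A'ᵢ)` lies in `[1 - 2ε, 1]`, hence
`1 ≤ A ∘ B ≤ 1 / (1 - 2ε) ≤ α`. -/

section

variable {ι : Type*} {X : ι → Type*}

theorem mu_nonneg (B : (∀ j, X j) → ℝ) : 0 ≤ mu B := by
  apply Real.sInf_nonneg
  rintro s ⟨n, a, Z, -, -, rfl⟩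
  positivity

theorem mu_le_of_eq_sum {κ : Type*} [Fintype κ] {B : (∀ j, X j) → ℝ} (a : κ → ℝ)
    (Z : κ → Set (∀ j, X j)) (hZ : ∀ t, IsCylinderIntersection (Z t))
    (hB : ∀ x, B x = ∑ t, a t * (Z t).indicator 1 x) :
    mu B ≤ ∑ t, |a t| := by
  let e := (Fintype.equivFin κ).symm
  refine csInf_le ⟨0, ?_⟩ ⟨Fintype.card κ, a ∘ e, Z ∘ e, fun t => hZ (e t), fun x => ?_, ?_⟩
  · rintro s ⟨n, a, Z, -, -, rfl⟩
    positivity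
  · rw [hB x]
    exact (e.sum_comp fun t => a t * (Z t).indicator 1 x).symm
  · exact (e.sum_comp fun t => |a t|).symm

theorem muAlpha_nonneg (A : (∀ j, X j) → ℝ) (α : ℝ) : 0 ≤ muAlpha A α := by
  apply Real.sInf_nonneg
  rintro s ⟨B, -, rfl⟩
  exact mu_nonneg B

theorem muAlpha_le_mu {A B : (∀ j, X j) → ℝ} {α : ℝ}
    (hAB : ∀ x, 1 ≤ A x * B x ∧ A x * B x ≤ α) : muAlpha A α ≤ mu B :=
  csInf_le ⟨0, fun _ ⟨B', _, hs⟩ => hs ▸ mu_nonneg B'⟩ ⟨B, hAB, rfl⟩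

/-- A deterministic protocol of cost `c` for `f` yields such a partition with `m = 2 ^ c`. -/
def HasMonochromaticPartition (m : ℕ) (f : (∀ j, X j) → ℝ) : Prop :=
  ∃ Z : Fin m → Set (∀ j, X j), (∀ t, IsCylinderIntersection (Z t)) ∧
    (∀ t t', t ≠ t' → Disjoint (Z t) (Z t')) ∧ (⋃ t, Z t) = Set.univ ∧
    (∀ t, ∀ x ∈ Z t, ∀ x' ∈ Z t, f x = f x')

theorem HasMonochromaticPartition.exists_eq_sum_indicator {m : ℕ} {f : (∀ j, X j) → ℝ}
    (hf : HasMonochromaticPartition m f) (hf_abs : ∀ x, |f x| ≤ 1) :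
    ∃ (v : Fin m → ℝ) (Z : Fin m → Set (∀ j, X j)), (∀ t, IsCylinderIntersection (Z t)) ∧
      (∀ t, |v t| ≤ 1) ∧ ∀ x, f x = ∑ t, v t * (Z t).indicator 1 x := by
  classical
  obtain ⟨Z, hZ, hdisj, hcover, hmono⟩ := hf
  refine ⟨fun t => if h : (Z t).Nonempty then f h.some else 0, Z, hZ, fun t => ?_, fun x => ?_⟩
  · dsimp only
    split_ifs
    exacts [hf_abs _, by simp]
  · obtain ⟨t₀, hx⟩ := Set.mem_iUnion.1 (hcover ▸ Set.mem_univ x)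
    have hne : (Z t₀).Nonempty := ⟨x, hx⟩
    dsimp only
    rw [Finset.sum_eq_single_of_mem t₀ (Finset.mem_univ _), dif_pos hne,
      Set.indicator_of_mem hx, Pi.one_apply, mul_one, hmono t₀ x hx _ hne.some_mem]
    intro t _ ht
    rw [Set.indicator_of_notMem fun hxt => (hdisj t t₀ ht).le_bot ⟨hxt, hx⟩, mul_zero]

theorem mu_sum_mul_le_of_hasMonochromaticPartition {κ : Type*} [Fintype κ] {m : ℕ}
    (w : κ → ℝ) (f : κ → (∀ j, X j) → ℝ) (hf_abs : ∀ i x, |f i x| ≤ 1)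
    (hf : ∀ i, HasMonochromaticPartition m (f i)) :
    mu (fun x => ∑ i, w i * f i x) ≤ m * ∑ i, |w i| := by
  choose v Z hZ hv hdec using fun i => (hf i).exists_eq_sum_indicator (hf_abs i)
  calc mu (fun x => ∑ i, w i * f i x)
      ≤ ∑ q : κ × Fin m, |w q.1 * v q.1 q.2| := by
        refine mu_le_of_eq_sum _ (fun q => Z q.1 q.2) (fun q => hZ q.1 q.2) fun x => ?_
        simp only [Fintype.sum_prod_type, hdec _ x, Finset.mul_sum, mul_assoc]
    _ ≤ ∑ q : κ × Fin m, |w q.1| := by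
        refine Finset.sum_le_sum fun q _ => ?_
        rw [abs_mul]
        exact mul_le_of_le_one_right (abs_nonneg _) (hv q.1 q.2)
    _ = m * ∑ i, |w i| := by
        simp [Fintype.sum_prod_type, Finset.mul_sum]

end

theorem abs_sum_mul_le_one {κ : Type*} [Fintype κ] {p a : κ → ℝ} (hp : ∀ i, 0 ≤ p i)
    (hp_sum : ∑ i, p i = 1) (ha : ∀ i, |a i| ≤ 1) : |∑ i, p i * a i| ≤ 1 :=
  calc |∑ i, p i * a i| ≤ ∑ i, |p i * a i| := Finset.abs_sum_le_sum_abs _ _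
    _ ≤ ∑ i, p i := by
        gcongr with i
        rw [abs_mul, abs_of_nonneg (hp i)]
        exact mul_le_of_le_one_right (hp i) (ha i)
    _ = 1 := hp_sum

theorem mul_mem_Icc_of_abs_sub_le {a s e : ℝ} (ha : a = 1 ∨ a = -1) (h : |a - s| ≤ e)
    (hs : |s| ≤ 1) : a * s ∈ Set.Icc (1 - e) 1 := by
  rcases ha with rfl | rfl <;> rcases abs_le.1 h with ⟨h₁, h₂⟩ <;>
    rcases abs_le.1 hs with ⟨h₃, h₄⟩ <;> constructor <;> linarith

theorem logb_two_le_add_of_le_two_pow_mul {x y : ℝ} {c : ℕ} (hx : 0 ≤ x) (hy : 1 ≤ y)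
    (h : x ≤ 2 ^ c * y) : Real.logb 2 x ≤ c + Real.logb 2 y := by
  rcases hx.eq_or_lt with rfl | hx
  · rw [Real.logb_zero]
    have := Real.logb_nonneg one_lt_two hy
    positivity
  · calc Real.logb 2 x ≤ Real.logb 2 (2 ^ c * y) := Real.logb_le_logb_of_le one_lt_two hx h
      _ = c + Real.logb 2 y := by
        rw [Real.logb_mul (by positivity) (by positivity), Real.logb_pow,
          Real.logb_self_eq_one one_lt_two, mul_one]

/-- If the randomized `ε`-error `k`-party NOF communication complexity of a sign tensor `A`
is at most `c` (i.e., `A` is `2ε`-approximated by a convex combination of sign tensors each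
having a monochromatic partition into `2^c` cylinder intersections), then for any
`α ≥ 1/(1-2ε)`, `log₂ μ^α(A) ≤ c + log₂(1/(1-2ε))`. -/
theorem stmt6 {k : ℕ} {X : Fin k → Type*} [∀ i, Fintype (X i)]
    (A : (∀ j, X j) → ℝ) (hA : ∀ x, A x = 1 ∨ A x = -1)
    (ε : ℝ) (hε0 : 0 ≤ ε) (hε : ε < 1 / 2) (c : ℕ)
    (hR : ∃ (ℓ : ℕ) (p : Fin ℓ → ℝ) (A' : Fin ℓ → ((∀ j, X j) → ℝ)),
      (∀ i, 0 ≤ p i) ∧ (∑ i, p i) = 1 ∧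
      (∀ i x, A' i x = 1 ∨ A' i x = -1) ∧
      (∀ i, ∃ Z : Fin (2 ^ c) → Set (∀ j, X j),
        (∀ t, IsCylinderIntersection (Z t)) ∧
        (∀ t t', t ≠ t' → Disjoint (Z t) (Z t')) ∧
        (⋃ t, Z t) = Set.univ ∧
        (∀ t, ∀ x ∈ Z t, ∀ x' ∈ Z t, A' i x = A' i x')) ∧
      (∀ x, |A x - ∑ i, p i * A' i x| ≤ 2 * ε))
    (α : ℝ) (hα : 1 / (1 - 2 * ε) ≤ α) :
    Real.logb 2 (muAlpha A α) ≤ c + Real.logb 2 (1 / (1 - 2 * ε)) := by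
  obtain ⟨ℓ, p, A', hp0, hp1, hsign, hpart, happrox⟩ := hR
  set δ := 1 - 2 * ε
  have hδ : 0 < δ := by linarith
  have hA'_abs : ∀ i x, |A' i x| ≤ 1 := fun i x => by
    rcases hsign i x with h | h <;> simp [h]
  let B : (∀ j, X j) → ℝ := fun x => ∑ i, p i / δ * A' i x
  have hAB : ∀ x, 1 ≤ A x * B x ∧ A x * B x ≤ α := by
    intro x
    have hB : A x * B x = A x * (∑ i, p i * A' i x) / δ := by
      simp only [B, Finset.mul_sum, Finset.sum_div]
      exact Finset.sum_congr rfl fun i _ => by ring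
    obtain ⟨hlo, hhi⟩ := mul_mem_Icc_of_abs_sub_le (hA x) (happrox x)
      (abs_sum_mul_le_one hp0 hp1 (hA'_abs · x))
    rw [hB, le_div_iff₀ hδ, one_mul]
    exact ⟨hlo, (div_le_div_of_nonneg_right hhi hδ.le).trans hα⟩
  have hmuB : mu B ≤ 2 ^ c * (1 / δ) := by
    have := mu_sum_mul_le_of_hasMonochromaticPartition (fun i => p i / δ) A' hA'_abs hpart
    simpa [abs_div, abs_of_nonneg (hp0 _), abs_of_pos hδ, ← Finset.sum_div, hp1] using this
  exact logb_two_le_add_of_le_two_pow_mul (muAlpha_nonneg A α)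
    (one_le_one_div hδ (by linarith)) ((muAlpha_le_mu hAB).trans hmuB)
end

section
/- For any real k-tensor B on X₁×...×X_k, (μ*(B)/size(B))^{2^{k-1}} ≤ μ*(B ∙₁ B)/size(B ∙₁ B), where B ∙₁ B is the contraction product along the first dimension. -/
open scoped BigOperators

variable {ι : Type*} [Fintype ι] [DecidableEq ι] {X : ι → Type*} [∀ i, Fintype (X i)]

/-!
Write the cylinder intersection as `Z = C₀ ∩ ⋯ ∩ Cₘ`, with `Cᵢ` independent of `xᵢ`. As `C₀` does
not depend on `x₀`, its indicator can be absorbed into `B`. Each remaining indicator `1_{Cᵢ}`,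
`i ≥ 1`, is removed by one Cauchy–Schwarz inequality over all variables but `xᵢ`, at the cost of
squaring and of doubling the coordinate `xᵢ`. After `m` steps every coordinate except `x₀` is
doubled: what is left is the contraction `B ∙₁ B` tested against the set of doubled points all of
whose `2^m` slices lie in `C₀`, which is again a cylinder intersection.
-/

open Finset

universe u

lemma IsCylinder.indicator_update {κ : Type*} [DecidableEq κ] {Y : κ → Type*} {i : κ}
    {C : Set (∀ j, Y j)} (hC : IsCylinder i C) (x : ∀ j, Y j) (v : Y i) :
    C.indicator (1 : (∀ j, Y j) → ℝ) (Function.update x i v) = C.indicator 1 x := by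
  have hmem : Function.update x i v ∈ C ↔ x ∈ C :=
    ⟨hC _ _ fun j hj => Function.update_of_ne hj _ _,
      hC _ _ fun j hj => (Function.update_of_ne hj _ _).symm⟩
  by_cases hx : x ∈ C
  · rw [Set.indicator_of_mem hx, Set.indicator_of_mem (hmem.2 hx)]; rfl
  · rw [Set.indicator_of_notMem hx, Set.indicator_of_notMem (mt hmem.1 hx)]

lemma isCylinderIntersection_univ {κ : Type*} {Y : κ → Type*} :
    IsCylinderIntersection (Set.univ : Set (∀ j, Y j)) :=
  ⟨fun _ => Set.univ, fun _ _ _ _ _ => trivial, Set.iInter_univ.symm⟩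

lemma finite_mustar_set (Q : (∀ j, X j) → ℝ) :
    {r : ℝ | ∃ Z : Set (∀ j, X j), IsCylinderIntersection Z ∧
      r = |∑ x, Q x * Z.indicator 1 x|}.Finite :=
  (Set.finite_range fun Z : Set (∀ j, X j) => |∑ x, Q x * Z.indicator 1 x|).subset
    (by rintro r ⟨Z, -, rfl⟩; exact ⟨Z, rfl⟩)

lemma exists_isCylinderIntersection_mustar_eq (Q : (∀ j, X j) → ℝ) :
    ∃ Z : Set (∀ j, X j), IsCylinderIntersection Z ∧
      mustar Q = |∑ x, Q x * Z.indicator 1 x| := by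
  refine Set.Nonempty.csSup_mem ?_ (finite_mustar_set Q)
  exact ⟨_, Set.univ, isCylinderIntersection_univ, rfl⟩

-- `∅` is allowed because it is not a cylinder intersection when there are no dimensions.
lemma abs_expect_mul_indicator_le_mustar_div_card (Q : (∀ j, X j) → ℝ) {Z : Set (∀ j, X j)}
    (hZ : IsCylinderIntersection Z ∨ Z = ∅) :
    |𝔼 x, Q x * Z.indicator 1 x| ≤ mustar Q / Fintype.card (∀ j, X j) := by
  rw [Fintype.expect_eq_sum_div_card, abs_div, Nat.abs_cast]
  gcongr
  obtain hZ | rfl := hZ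
  · exact le_csSup (finite_mustar_set Q).bddAbove ⟨Z, hZ, rfl⟩
  · simp only [Set.indicator_empty, mul_zero, sum_const_zero, abs_zero]
    exact (abs_nonneg _).trans
      (le_csSup (finite_mustar_set Q).bddAbove ⟨Set.univ, isCylinderIntersection_univ, rfl⟩)

lemma indicator_iInter_one_eq_prod {κ α : Type*} [Fintype κ] (C : κ → Set α) (x : α) :
    (⋂ i, C i).indicator (1 : α → ℝ) x = ∏ i, (C i).indicator 1 x := by
  rw [prod_indicator_const_apply]
  simp

lemma abs_indicator_one_le {α : Type*} (s : Set α) (x : α) : |s.indicator (1 : α → ℝ) x| ≤ 1 := by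
  simpa using norm_indicator_le_norm_self (s := s) (1 : α → ℝ) x

lemma expect_prod_type {M U W : Type*} [AddCommMonoid M] [Module ℚ≥0 M] [Fintype U] [Fintype W]
    (f : U × W → M) :
    𝔼 p, f p = 𝔼 u, 𝔼 w, f (u, w) := by
  rw [← univ_product_univ, Finset.expect_product]

lemma expect_pi_fin_succ {M : Type*} [AddCommMonoid M] [Module ℚ≥0 M] {m : ℕ}
    {α : Fin (m + 1) → Type*} [∀ i, Fintype (α i)] (f : (∀ i, α i) → M) :
    𝔼 x, f x = 𝔼 x₀ : α 0, 𝔼 x : ∀ i : Fin m, α i.succ, f (Fin.cons x₀ x) := by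
  rw [← Finset.expect_product', univ_product_univ]
  exact Fintype.expect_equiv (Fin.consEquiv α).symm _ _ fun _ => by simp

lemma prod_pi_fin_succ {M : Type*} [CommMonoid M] {m : ℕ} {α : Fin (m + 1) → Type*}
    [∀ i, Fintype (α i)] (f : (∀ i, α i) → M) :
    ∏ x, f x = ∏ x₀ : α 0, ∏ x : ∀ i : Fin m, α i.succ, f (Fin.cons x₀ x) := by
  refine (Fintype.prod_equiv (Fin.consEquiv α).symm _ (fun p => f (Fin.cons p.1 p.2))
    fun _ => by simp).trans ?_
  exact Fintype.prod_prod_type _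

lemma sq_expect_eq_expect_prod_bool {K V : Type*} [Semifield K] [CharZero K] [Fintype V]
    (h : V → K) :
    (𝔼 v, h v) ^ 2 = 𝔼 t : Bool → V, ∏ b, h (t b) := by
  rw [sq, Fintype.expect_mul_expect, ← Finset.expect_product' univ univ fun v v' => h v * h v',
    univ_product_univ]
  exact Fintype.expect_equiv (Equiv.boolArrowEquivProd V).symm _ _ fun _ => by simp [mul_comm]

lemma sq_expect_mul_le_expect_prod_bool {U W V : Type*} [Fintype U] [Fintype W] [Fintype V]
    (g h : U → W → V → ℝ) (hg : ∀ u w v, |g u w v| ≤ 1) (hgv : ∀ u w v v', g u w v = g u w v') :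
    (𝔼 u, 𝔼 w, 𝔼 v, g u w v * h u w v) ^ 2 ≤ 𝔼 u, 𝔼 t : Bool → V, 𝔼 w, ∏ b, h u w (t b) := by
  obtain hV | ⟨⟨v₀⟩⟩ := isEmpty_or_nonempty V
  · simp
  have hprod (f : U → W → ℝ) : 𝔼 u, 𝔼 w, f u w = 𝔼 p : U × W, f p.1 p.2 :=
    (expect_prod_type fun p => f p.1 p.2).symm
  calc (𝔼 u, 𝔼 w, 𝔼 v, g u w v * h u w v) ^ 2
      = (𝔼 p : U × W, g p.1 p.2 v₀ * 𝔼 v, h p.1 p.2 v) ^ 2 := by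
        simp only [hgv _ _ _ v₀, mul_expect, hprod]
    _ ≤ (𝔼 p : U × W, g p.1 p.2 v₀ ^ 2) * 𝔼 p : U × W, (𝔼 v, h p.1 p.2 v) ^ 2 :=
      expect_mul_sq_le_sq_mul_sq _ _ _
    _ ≤ 𝔼 p : U × W, (𝔼 v, h p.1 p.2 v) ^ 2 := by
      refine mul_le_of_le_one_left (expect_nonneg fun _ _ => sq_nonneg _) ?_
      obtain hUW | hUW := isEmpty_or_nonempty (U × W)
      · simp
      · exact expect_le univ_nonempty fun p _ => (sq_le_one_iff_abs_le_one _).2 (hg _ _ _)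
    _ = 𝔼 u, 𝔼 w, 𝔼 t : Bool → V, ∏ b, h u w (t b) := by
      rw [← hprod fun u w => (𝔼 v, h u w v) ^ 2]
      simp only [sq_expect_eq_expect_prod_bool]
    _ = 𝔼 u, 𝔼 t : Bool → V, 𝔼 w, ∏ b, h u w (t b) :=
      expect_congr rfl fun u _ => expect_comm _ _ _

-- The variable `y` collects `x₀` together with the coordinates already doubled.
theorem abs_expect_mul_prod_pow_le_abs_expect_prod :
    ∀ (m : ℕ) {Y : Type u} [Fintype Y] {X : Fin m → Type u} [∀ i, Fintype (X i)]
      (F : Y → (∀ i, X i) → ℝ) (φ : Fin m → Y → (∀ i, X i) → ℝ),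
      (∀ i y x, |φ i y x| ≤ 1) → (∀ i y x v, φ i y (Function.update x i v) = φ i y x) →
      |𝔼 y, 𝔼 x, F y x * ∏ i, φ i y x| ^ 2 ^ m ≤
        |𝔼 y, 𝔼 w : ∀ i, Bool → X i, ∏ ε : Fin m → Bool, F y fun i => w i (ε i)|
  | 0, Y, _, X, _, F, φ, _, _ => by
    simp [Subsingleton.elim _ (default : ∀ i : Fin 0, X i)]
  | m + 1, Y, _, X, _, F, φ, hφ, hφx => by
    let F' (yt : Y × (Bool → X 0)) (x : ∀ i : Fin m, X i.succ) : ℝ :=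
      ∏ b, F yt.1 (Fin.cons (yt.2 b) x)
    let φ' (i : Fin m) (yt : Y × (Bool → X 0)) (x : ∀ i : Fin m, X i.succ) : ℝ :=
      ∏ b, φ i.succ yt.1 (Fin.cons (yt.2 b) x)
    have hφ' (i yt x) : |φ' i yt x| ≤ 1 := by
      rw [Finset.abs_prod]
      exact prod_le_one (fun _ _ => abs_nonneg _) fun _ _ => hφ _ _ _
    have hφ'x (i yt x v) : φ' i yt (Function.update x i v) = φ' i yt x := by
      simp only [φ', Fin.cons_update, hφx]
    have hstep : (𝔼 y, 𝔼 x, F y x * ∏ i, φ i y x) ^ 2 ≤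
        𝔼 yt, 𝔼 x, F' yt x * ∏ i, φ' i yt x := by
      have hsplit : 𝔼 y, 𝔼 x, F y x * ∏ i, φ i y x =
          𝔼 y, 𝔼 x : ∀ i : Fin m, X i.succ, 𝔼 x₀, φ 0 y (Fin.cons x₀ x) *
            (F y (Fin.cons x₀ x) * ∏ i : Fin m, φ i.succ y (Fin.cons x₀ x)) := by
        refine expect_congr rfl fun y _ => ?_
        rw [expect_pi_fin_succ, expect_comm]
        exact expect_congr rfl fun x _ => expect_congr rfl fun x₀ _ => by
          rw [Fin.prod_univ_succ]; ring
      have hφ₀ (y x) (x₀ x₀' : X 0) : φ 0 y (Fin.cons x₀ x) = φ 0 y (Fin.cons x₀' x) := by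
        rw [← Fin.update_cons_zero x₀' x x₀, hφx]
      rw [hsplit]
      refine (sq_expect_mul_le_expect_prod_bool _ _ (fun y x x₀ => hφ 0 y _) hφ₀).trans_eq ?_
      rw [expect_prod_type]
      refine expect_congr rfl fun y _ => expect_congr rfl fun t _ => expect_congr rfl fun x _ => ?_
      simp only [F', φ', prod_mul_distrib]
      rw [prod_comm]
    have hdouble : 𝔼 yt, 𝔼 w : ∀ i : Fin m, Bool → X i.succ,
          ∏ ε : Fin m → Bool, F' yt (fun i => w i (ε i)) =
        𝔼 y, 𝔼 w : ∀ i, Bool → X i, ∏ ε : Fin (m + 1) → Bool, F y fun i => w i (ε i) := by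
      have hcons (t : Bool → X 0) (w : ∀ i : Fin m, Bool → X i.succ) (b : Bool)
          (ε : Fin m → Bool) :
          (fun i => (Fin.cons t w : ∀ i, Bool → X i) i ((Fin.cons b ε : Fin (m + 1) → Bool) i)) =
            Fin.cons (t b) fun i => w i (ε i) := by
        funext i
        cases i using Fin.cases <;> rfl
      rw [expect_prod_type]
      refine expect_congr rfl fun y _ => ?_
      rw [expect_pi_fin_succ]
      refine expect_congr rfl fun t _ => expect_congr rfl fun w _ => ?_
      rw [prod_pi_fin_succ, prod_comm]
      simp only [hcons]
    calc |𝔼 y, 𝔼 x, F y x * ∏ i, φ i y x| ^ 2 ^ (m + 1)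
        = ((𝔼 y, 𝔼 x, F y x * ∏ i, φ i y x) ^ 2) ^ 2 ^ m := by
          rw [pow_succ', pow_mul, sq_abs]
      _ ≤ |𝔼 yt, 𝔼 x, F' yt x * ∏ i, φ' i yt x| ^ 2 ^ m :=
        pow_le_pow_left₀ (sq_nonneg _) (hstep.trans (le_abs_self _)) _
      _ ≤ _ := (abs_expect_mul_prod_pow_le_abs_expect_prod m F' φ' hφ' hφ'x).trans_eq
        (by rw [hdouble])

section Contraction

variable {m : ℕ} {X : Fin (m + 1) → Type*}

noncomputable def contraction [Fintype (X 0)] (B : (∀ j, X j) → ℝ)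
    (w : ∀ p : Bool × Fin m, X p.2.succ) : ℝ :=
  𝔼 x₀, ∏ ε : Fin m → Bool, B (Fin.cons x₀ fun i => w (ε i, i))

def contractionSet (C : Set (∀ j, X j)) : Set (∀ p : Bool × Fin m, X p.2.succ) :=
  {w | ∀ x₀ (ε : Fin m → Bool), (Fin.cons x₀ fun i => w (ε i, i) : ∀ j, X j) ∈ C}

lemma prod_indicator_cons_eq_indicator_contractionSet {C : Set (∀ j, X j)}
    (hC : IsCylinder 0 C) (x₀ : X 0) (w : ∀ p : Bool × Fin m, X p.2.succ) :
    ∏ ε : Fin m → Bool, C.indicator (1 : (∀ j, X j) → ℝ) (Fin.cons x₀ fun i => w (ε i, i)) =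
      (contractionSet C).indicator 1 w := by
  by_cases hw : w ∈ contractionSet C
  · rw [Set.indicator_of_mem hw]
    exact prod_eq_one fun ε _ => by rw [Set.indicator_of_mem (hw x₀ ε)]; rfl
  · rw [Set.indicator_of_notMem hw]
    obtain ⟨x₀', ε, hε⟩ : ∃ (x₀' : X 0) (ε : Fin m → Bool),
        (Fin.cons x₀' fun i => w (ε i, i) : ∀ j, X j) ∉ C := by
      simpa [contractionSet] using hw
    refine prod_eq_zero (mem_univ ε) (Set.indicator_of_notMem (fun h => hε (hC _ _ ?_ h)) _)
    intro j hj
    cases j using Fin.cases with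
    | zero => exact absurd rfl hj
    | succ i => rfl

-- The `p`-th cylinder asks only the slices that do not read the coordinate `p` to lie in `C`.
lemma isCylinderIntersection_contractionSet_or_eq_empty (C : Set (∀ j, X j)) :
    IsCylinderIntersection (contractionSet C) ∨ contractionSet C = ∅ := by
  obtain hm | ⟨⟨i₀⟩⟩ := isEmpty_or_nonempty (Fin m)
  · obtain h | ⟨w₀, hw₀⟩ := (contractionSet C).eq_empty_or_nonempty
    · exact Or.inr h
    · left
      rw [Set.eq_univ_of_forall fun w => (Subsingleton.elim w₀ w ▸ hw₀ : w ∈ contractionSet C)]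
      exact isCylinderIntersection_univ
  · left
    refine ⟨fun p => {w | ∀ x₀ (ε : Fin m → Bool), ε p.2 ≠ p.1 →
      (Fin.cons x₀ fun i => w (ε i, i) : ∀ j, X j) ∈ C}, fun p w w' hww' hw x₀ ε hε => ?_, ?_⟩
    · have hεw : (fun i => w' (ε i, i)) = fun i => w (ε i, i) :=
        funext fun i => (hww' _ fun h => by subst h; exact hε rfl).symm
      simpa only [hεw] using hw x₀ ε hε
    · ext w
      simp only [contractionSet, Set.mem_iInter, Set.mem_ofPred_eq]
      exact ⟨fun hw p x₀ ε _ => hw x₀ ε, fun hw x₀ ε => hw (!ε i₀, i₀) x₀ ε (by simp)⟩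

lemma expect_expect_prod_mul_indicator_eq [∀ i, Fintype (X i)] {C : Set (∀ j, X j)}
    (hC : IsCylinder 0 C) (B : (∀ j, X j) → ℝ) :
    𝔼 x₀, 𝔼 w : ∀ i : Fin m, Bool → X i.succ, ∏ ε : Fin m → Bool,
        B (Fin.cons x₀ fun i => w i (ε i)) * C.indicator 1 (Fin.cons x₀ fun i => w i (ε i)) =
      𝔼 w, contraction B w * (contractionSet C).indicator 1 w := by
  let e : (∀ i : Fin m, Bool → X i.succ) ≃ ∀ p : Bool × Fin m, X p.2.succ :=
    { toFun := fun w p => w p.2 p.1, invFun := fun w i b => w (b, i),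
      left_inv := fun _ => rfl, right_inv := fun _ => rfl }
  rw [expect_comm]
  refine Fintype.expect_equiv e _ _ fun w => ?_
  simp only [contraction, expect_mul, prod_mul_distrib]
  refine expect_congr rfl fun x₀ _ => ?_
  rw [← prod_indicator_cons_eq_indicator_contractionSet hC x₀]
  rfl

end Contraction

theorem stmt8_general {m : ℕ} {X : Fin (m + 1) → Type*} [∀ i, Fintype (X i)]
    (B : (∀ j, X j) → ℝ) :
    (mustar B / (Fintype.card (∀ j, X j) : ℝ)) ^ (2 ^ m) ≤
      mustar (fun w : ∀ p : Bool × Fin m, X p.2.succ =>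
          (∑ x₀ : X 0, ∏ ε : Fin m → Bool, B (Fin.cons x₀ (fun i => w (ε i, i)))) /
            (Fintype.card (X 0) : ℝ)) /
        (Fintype.card (∀ p : Bool × Fin m, X p.2.succ) : ℝ) := by
  obtain ⟨_, ⟨C, hC, rfl⟩, hB⟩ := exists_isCylinderIntersection_mustar_eq B
  have hcontraction : (fun w : ∀ p : Bool × Fin m, X p.2.succ =>
      (∑ x₀ : X 0, ∏ ε : Fin m → Bool, B (Fin.cons x₀ (fun i => w (ε i, i)))) /
        (Fintype.card (X 0) : ℝ)) = contraction B :=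
    funext fun w => (Fintype.expect_eq_sum_div_card _).symm
  have hsplit : mustar B / (Fintype.card (∀ j, X j) : ℝ) =
      |𝔼 x₀, 𝔼 x, B (Fin.cons x₀ x) * (C 0).indicator 1 (Fin.cons x₀ x) *
        ∏ i : Fin m, (C i.succ).indicator 1 (Fin.cons x₀ x)| := by
    rw [hB, ← Nat.abs_cast, ← abs_div, ← Fintype.expect_eq_sum_div_card, expect_pi_fin_succ]
    congr 1
    refine expect_congr rfl fun x₀ _ => expect_congr rfl fun x _ => ?_
    rw [indicator_iInter_one_eq_prod, Fin.prod_univ_succ, mul_assoc]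
  have hφx (i : Fin m) (x₀ : X 0) (x : ∀ i : Fin m, X i.succ) (v : X i.succ) :
      (C i.succ).indicator (1 : (∀ j, X j) → ℝ) (Fin.cons x₀ (Function.update x i v)) =
        (C i.succ).indicator 1 (Fin.cons x₀ x) := by
    rw [Fin.cons_update, (hC i.succ).indicator_update]
  rw [hsplit, hcontraction]
  calc _ ≤ _ := abs_expect_mul_prod_pow_le_abs_expect_prod m _ _
        (fun _ _ _ => abs_indicator_one_le _ _) hφx
    _ = |𝔼 w, contraction B w * (contractionSet (C 0)).indicator 1 w| := by
      rw [expect_expect_prod_mul_indicator_eq (hC 0)]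
    _ ≤ _ := abs_expect_mul_indicator_le_mustar_div_card _
        (isCylinderIntersection_contractionSet_or_eq_empty _)

/-- For any real `(m+1)`-tensor `B`, `(μ*(B)/size(B))^{2^m} ≤ μ*(B ∙₁ B)/size(B ∙₁ B)`,
where `B ∙₁ B` is the contraction product along the first dimension: the `2m`-tensor whose
entry at `w` (two copies of each of the last `m` coordinates) is
`E_{x₀}[ ∏_{ε} B(x₀, w(ε₁,1), …, w(ε_m,m)) ]`. -/
theorem stmt8 {m : ℕ} {X : Fin (m + 1) → Type*} [∀ i, Fintype (X i)]
    [∀ i, Nonempty (X i)] (B : (∀ j, X j) → ℝ) :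
    (mustar B / (Fintype.card (∀ j, X j) : ℝ)) ^ (2 ^ m) ≤
      mustar (fun w : ∀ p : Bool × Fin m, X p.2.succ =>
          (∑ x₀ : X 0, ∏ ε : Fin m → Bool, B (Fin.cons x₀ (fun i => w (ε i, i)))) /
            (Fintype.card (X 0) : ℝ)) /
        (Fintype.card (∀ p : Bool × Fin m, X p.2.succ) : ℝ) :=
  stmt8_general B
end

section
/- If H is an N×N Hadamard matrix (sign matrix with pairwise orthogonal rows), then μ*(H) ≤ N^{3/2}, and consequently μ^∞(H) ≥ √N. -/
open scoped BigOperators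

/-- The 2-party dual norm: `μ*(Q) = max_R |⟨Q, χ(R)⟩|` over combinatorial rectangles. -/
noncomputable def mustarM {N : ℕ} (Q : Fin N → Fin N → ℝ) : ℝ :=
  sSup {r : ℝ | ∃ S T : Finset (Fin N), r = |∑ i ∈ S, ∑ j ∈ T, Q i j|}

/-- The 2-party cylinder intersection norm: decompositions into combinatorial rectangles. -/
noncomputable def muM {N : ℕ} (B : Fin N → Fin N → ℝ) : ℝ :=
  sInf {s : ℝ | ∃ (n : ℕ) (α : Fin n → ℝ) (S T : Fin n → Finset (Fin N)),
    (∀ i j, B i j = ∑ t, α t * (if i ∈ S t ∧ j ∈ T t then 1 else 0)) ∧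
    s = ∑ t, |α t|}

/-- `μ^∞(A) = min { μ(B) : 1 ≤ A∘B }` for sign matrices. -/
noncomputable def muInfM {N : ℕ} (A : Fin N → Fin N → ℝ) : ℝ :=
  sInf {s : ℝ | ∃ B : Fin N → Fin N → ℝ, (∀ i j, 1 ≤ A i j * B i j) ∧ s = muM B}

/-!
For a rectangle `S × T`, Cauchy–Schwarz over the columns in `T` and the orthogonality of the rows
give `(∑_{S×T} H)² ≤ |T| · ‖∑_{i∈S} H_i‖² = |T| · |S| · N ≤ N³`, so `μ*(H) ≤ N^{3/2}`.
If `1 ≤ H ∘ B` and `B = ∑ₜ αₜ χ(Rₜ)`, then `N² ≤ ⟨H, B⟩ = ∑ₜ αₜ ⟨H, χ(Rₜ)⟩ ≤ (∑ₜ |αₜ|) · μ*(H)`,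
hence `μ^∞(H) ≥ N² / N^{3/2} = √N`.
-/

open Finset

section OrthogonalRows

variable {ι κ : Type*} [Fintype κ] {H : ι → κ → ℝ} {c : ℝ}

theorem sum_sq_sum_rows_eq (horth : ∀ i i', i ≠ i' → ∑ j, H i j * H i' j = 0)
    (hnorm : ∀ i, ∑ j, H i j * H i j = c) (S : Finset ι) :
    ∑ j, (∑ i ∈ S, H i j) ^ 2 = #S * c := by
  calc ∑ j, (∑ i ∈ S, H i j) ^ 2 = ∑ i ∈ S, ∑ i' ∈ S, ∑ j, H i j * H i' j := by
        simp_rw [sq, sum_mul_sum]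
        rw [sum_comm]
        exact sum_congr rfl fun _ _ => sum_comm
    _ = ∑ i ∈ S, c := sum_congr rfl fun i hi => by
        rw [sum_eq_single_of_mem i hi fun i' _ h => horth i i' h.symm, hnorm]
    _ = #S * c := by rw [sum_const, nsmul_eq_mul]

theorem sq_sum_rect_le (horth : ∀ i i', i ≠ i' → ∑ j, H i j * H i' j = 0)
    (hnorm : ∀ i, ∑ j, H i j * H i j = c) (S : Finset ι) (T : Finset κ) :
    (∑ i ∈ S, ∑ j ∈ T, H i j) ^ 2 ≤ #T * (#S * c) := by
  rw [sum_comm, ← sum_sq_sum_rows_eq horth hnorm S]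
  calc (∑ j ∈ T, ∑ i ∈ S, H i j) ^ 2 ≤ #T * ∑ j ∈ T, (∑ i ∈ S, H i j) ^ 2 :=
        sq_sum_le_card_mul_sum_sq
    _ ≤ #T * ∑ j, (∑ i ∈ S, H i j) ^ 2 := mul_le_mul_of_nonneg_left
        (sum_le_sum_of_subset_of_nonneg (subset_univ T) fun _ _ _ => sq_nonneg _) (by positivity)

end OrthogonalRows

theorem sqrt_pow_three {x : ℝ} (hx : 0 ≤ x) : √(x ^ 3) = x ^ ((3 : ℝ) / 2) := by
  rw [Real.sqrt_eq_rpow, ← Real.rpow_natCast x 3, ← Real.rpow_mul hx]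
  norm_num

theorem sq_div_rpow_three_halves {x : ℝ} (hx : 0 ≤ x) : x ^ 2 / x ^ ((3 : ℝ) / 2) = √x := by
  rcases hx.eq_or_lt with rfl | hx
  · simp
  rw [Real.sqrt_eq_rpow, ← Real.rpow_natCast x 2, ← Real.rpow_sub hx]
  norm_num

theorem abs_sum_rect_le_of_hadamard {N : ℕ} {H : Fin N → Fin N → ℝ}
    (hsign : ∀ i j, H i j = 1 ∨ H i j = -1)
    (horth : ∀ i i', i ≠ i' → ∑ j, H i j * H i' j = 0) (S T : Finset (Fin N)) :
    |∑ i ∈ S, ∑ j ∈ T, H i j| ≤ (N : ℝ) ^ ((3 : ℝ) / 2) := by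
  have hnorm : ∀ i, ∑ j, H i j * H i j = N := fun i => by
    simp [mul_self_eq_one_iff.mpr (hsign i _)]
  have hS : (#S : ℝ) ≤ N := by exact_mod_cast card_le_univ S |>.trans_eq (Fintype.card_fin N)
  have hT : (#T : ℝ) ≤ N := by exact_mod_cast card_le_univ T |>.trans_eq (Fintype.card_fin N)
  rw [← sqrt_pow_three N.cast_nonneg]
  refine Real.abs_le_sqrt ((sq_sum_rect_le horth hnorm S T).trans ?_)
  calc (#T : ℝ) * (#S * N) ≤ N * (N * N) := by gcongr
    _ = (N : ℝ) ^ 3 := by ring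

theorem mustarM_le {N : ℕ} {Q : Fin N → Fin N → ℝ} {m : ℝ} (hm : 0 ≤ m)
    (hQ : ∀ S T : Finset (Fin N), |∑ i ∈ S, ∑ j ∈ T, Q i j| ≤ m) : mustarM Q ≤ m :=
  Real.sSup_le (by rintro r ⟨S, T, rfl⟩; exact hQ S T) hm

theorem sum_sum_mul_rect_indicator {ι κ : Type*} [Fintype ι] [Fintype κ] [DecidableEq ι]
    [DecidableEq κ] (f : ι → κ → ℝ) (S : Finset ι) (T : Finset κ) :
    ∑ i, ∑ j, f i j * (if i ∈ S ∧ j ∈ T then 1 else 0) = ∑ i ∈ S, ∑ j ∈ T, f i j := by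
  simp [ite_and, sum_ite_mem]

theorem exists_rect_decomposition {N : ℕ} (B : Fin N → Fin N → ℝ) :
    ∃ (n : ℕ) (α : Fin n → ℝ) (S T : Fin n → Finset (Fin N)),
      ∀ i j, B i j = ∑ t, α t * (if i ∈ S t ∧ j ∈ T t then 1 else 0) := by
  let e := finProdFinEquiv (m := N) (n := N)
  refine ⟨N * N, fun t => B (e.symm t).1 (e.symm t).2, fun t => {(e.symm t).1},
    fun t => {(e.symm t).2}, fun i j => ?_⟩
  rw [← e.sum_comp]
  simp [Fintype.sum_prod_type, ite_and]

theorem le_muM {N : ℕ} {B : Fin N → Fin N → ℝ} {c : ℝ}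
    (h : ∀ (n : ℕ) (α : Fin n → ℝ) (S T : Fin n → Finset (Fin N)),
      (∀ i j, B i j = ∑ t, α t * (if i ∈ S t ∧ j ∈ T t then 1 else 0)) → c ≤ ∑ t, |α t|) :
    c ≤ muM B := by
  obtain ⟨n, α, S, T, hB⟩ := exists_rect_decomposition B
  refine le_csInf ⟨_, n, α, S, T, hB, rfl⟩ ?_
  rintro s ⟨n, α, S, T, hB, rfl⟩
  exact h n α S T hB

theorem sum_mul_le_of_rect_decomposition {N n : ℕ} {A B : Fin N → Fin N → ℝ} {m : ℝ}
    {α : Fin n → ℝ} {S T : Fin n → Finset (Fin N)}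
    (hB : ∀ i j, B i j = ∑ t, α t * (if i ∈ S t ∧ j ∈ T t then 1 else 0))
    (hA : ∀ S T : Finset (Fin N), |∑ i ∈ S, ∑ j ∈ T, A i j| ≤ m) :
    ∑ i, ∑ j, A i j * B i j ≤ (∑ t, |α t|) * m := by
  calc ∑ i, ∑ j, A i j * B i j
      = ∑ t, α t * ∑ i, ∑ j, A i j * (if i ∈ S t ∧ j ∈ T t then 1 else 0) := by
        simp_rw [hB, mul_sum, sum_comm (γ := Fin n)]
        exact sum_congr rfl fun _ _ => sum_congr rfl fun _ _ => sum_congr rfl fun _ _ => by ring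
    _ = ∑ t, α t * ∑ i ∈ S t, ∑ j ∈ T t, A i j := by simp_rw [sum_sum_mul_rect_indicator]
    _ ≤ ∑ t, |α t| * m := sum_le_sum fun t _ => (le_abs_self _).trans <| by
        rw [abs_mul]
        exact mul_le_mul_of_nonneg_left (hA _ _) (abs_nonneg _)
    _ = (∑ t, |α t|) * m := (sum_mul ..).symm

theorem sq_div_le_muInfM {N : ℕ} {A : Fin N → Fin N → ℝ} {m : ℝ}
    (hsign : ∀ i j, A i j = 1 ∨ A i j = -1) (hm : 0 ≤ m)
    (hA : ∀ S T : Finset (Fin N), |∑ i ∈ S, ∑ j ∈ T, A i j| ≤ m) :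
    (N : ℝ) ^ 2 / m ≤ muInfM A := by
  refine le_csInf ⟨_, A, fun i j => (mul_self_eq_one_iff.mpr (hsign i j)).ge, rfl⟩ ?_
  rintro s ⟨B, hAB, rfl⟩
  refine le_muM fun n α S T hB => div_le_of_le_mul₀ hm (by positivity) ?_
  calc (N : ℝ) ^ 2 = ∑ _i : Fin N, ∑ _j : Fin N, (1 : ℝ) := by simp [sq]
    _ ≤ ∑ i, ∑ j, A i j * B i j := sum_le_sum fun i _ => sum_le_sum fun j _ => hAB i j
    _ ≤ (∑ t, |α t|) * m := sum_mul_le_of_rect_decomposition hB hA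

theorem stmt10_general (N : ℕ) (H : Fin N → Fin N → ℝ)
    (hsign : ∀ i j, H i j = 1 ∨ H i j = -1)
    (horth : ∀ i i', i ≠ i' → ∑ j, H i j * H i' j = 0) :
    mustarM H ≤ (N : ℝ) ^ ((3 : ℝ) / 2) ∧ Real.sqrt N ≤ muInfM H := by
  have hrect := abs_sum_rect_le_of_hadamard hsign horth
  have hm : (0 : ℝ) ≤ (N : ℝ) ^ ((3 : ℝ) / 2) := by positivity
  refine ⟨mustarM_le hm hrect, ?_⟩
  calc Real.sqrt N = (N : ℝ) ^ 2 / (N : ℝ) ^ ((3 : ℝ) / 2) :=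
        (sq_div_rpow_three_halves N.cast_nonneg).symm
    _ ≤ muInfM H := sq_div_le_muInfM hsign hm hrect

/-- If `H` is an `N×N` Hadamard matrix (sign matrix with pairwise orthogonal rows), then
`μ*(H) ≤ N^{3/2}` and consequently `μ^∞(H) ≥ √N`. -/
theorem stmt10 (N : ℕ) (hN : 0 < N) (H : Fin N → Fin N → ℝ)
    (hsign : ∀ i j, H i j = 1 ∨ H i j = -1)
    (horth : ∀ i i', i ≠ i' → ∑ j, H i j * H i' j = 0) :
    mustarM H ≤ (N : ℝ) ^ ((3 : ℝ) / 2) ∧ Real.sqrt N ≤ muInfM H :=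
  stmt10_general N H hsign horth
end

section
/- Let f : {-1,1}^n → {-1,1} and let d be a natural number. If there is no polynomial g of degree at most d with 1 ≤ f(x)g(x) ≤ α for all x (for a given α > 1), then there exists v : {-1,1}^n → ℝ such that: (1) ⟨v, χ_T⟩ = 0 for all |T| ≤ d, (2) ‖v‖₁ = 1, and (3) ⟨v, f⟩ ≥ (α−1)/(α+1). -/
/-!
Let `K` be the space of functions `x ↦ f x * p x` with `p` of degree at most `d`. The hypothesis
says that `K` misses the compact convex box `[1, α]^({-1,1}ⁿ)`, so Hahn–Banach gives a weight `w`
orthogonal to `K` with `⟨u, w⟩ > 0` on the box. Testing at the corner of the box that takes `1`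
where `w ≥ 0` and `α` elsewhere gives `(α - 1) ‖w‖₁ < (α + 1) ∑ w`, and `v = f w / ‖w‖₁` is the
dual polynomial.
-/

open scoped BigOperators

/-- The Fourier character `χ_T(x) = ∏_{i ∈ T} x_i` on the Boolean cube, with `true ↦ 1`
and `false ↦ -1`. -/
def chiT {n : ℕ} (T : Finset (Fin n)) (x : Fin n → Bool) : ℝ :=
  ∏ i ∈ T, (if x i then 1 else -1)

section Separation

variable {E : Type*} [TopologicalSpace E] [AddCommGroup E] [Module ℝ E]
  [IsTopologicalAddGroup E] [ContinuousSMul ℝ E] [LocallyConvexSpace ℝ E]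

theorem geometric_hahn_banach_compact_submodule {s : Set E} {K : Submodule ℝ E}
    (hs₁ : Convex ℝ s) (hs₂ : IsCompact s) (hK : IsClosed (K : Set E))
    (disj : Disjoint s K) :
    ∃ φ : StrongDual ℝ E, (∀ g ∈ K, φ g = 0) ∧ ∀ a ∈ s, 0 < φ a := by
  obtain ⟨φ, u, v, hs, huv, hK'⟩ :=
    geometric_hahn_banach_compact_closed hs₁ hs₂ K.convex hK disj
  -- `φ` is bounded below on the subspace `K`, hence vanishes on it.
  have hφK : ∀ g ∈ K, φ g = 0 := by
    intro g hg
    by_contra hne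
    have := hK' _ (K.smul_mem ((v - 1) / φ g) hg)
    rw [map_smul, smul_eq_mul, div_mul_cancel₀ _ hne] at this
    linarith
  have hv : v < 0 := by simpa using hK' 0 K.zero_mem
  exact ⟨-φ, fun g hg => by simp [hφK g hg], fun a ha => by
    have := hs a ha
    simp only [neg_apply]
    linarith⟩

end Separation

theorem exists_orthogonal_weight_of_disjoint_compact {ι : Type*} [Fintype ι]
    {s : Set (ι → ℝ)} {K : Submodule ℝ (ι → ℝ)} (hs₁ : Convex ℝ s) (hs₂ : IsCompact s)
    (disj : Disjoint s K) :
    ∃ w : ι → ℝ, (∀ g ∈ K, ∑ i, g i * w i = 0) ∧ ∀ u ∈ s, 0 < ∑ i, u i * w i := by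
  classical
  obtain ⟨φ, hK, hs⟩ :=
    geometric_hahn_banach_compact_submodule hs₁ hs₂ K.closed_of_finiteDimensional disj
  have hφ : ∀ g, φ g = ∑ i, g i * φ (Pi.single i 1) := fun g => by
    conv_lhs => rw [← Finset.univ_sum_single g]
    refine (map_sum φ _ _).trans (Finset.sum_congr rfl fun i _ => ?_)
    rw [← smul_eq_mul, ← map_smul, ← Pi.single_smul, smul_eq_mul, mul_one]
  exact ⟨fun i => φ (Pi.single i 1), fun g hg => (hφ g).symm.trans (hK g hg),
    fun u hu => (hφ u) ▸ hs u hu⟩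

theorem two_mul_ite_mul_eq (a b t : ℝ) :
    2 * ((if 0 ≤ t then a else b) * t) = (a + b) * t - (b - a) * |t| := by
  split_ifs with ht
  · rw [abs_of_nonneg ht]; ring
  · rw [abs_of_neg (not_le.mp ht)]; ring

theorem sub_mul_sum_abs_lt_add_mul_sum {ι : Type*} [Fintype ι] {a b : ℝ} (hab : a ≤ b)
    {w : ι → ℝ} (hw : ∀ u ∈ Set.Icc (fun _ => a) (fun _ => b), 0 < ∑ i, u i * w i) :
    (b - a) * ∑ i, |w i| < (a + b) * ∑ i, w i := by
  set corner : ι → ℝ := fun i => if 0 ≤ w i then a else b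
  have hcorner : corner ∈ Set.Icc (fun _ => a) (fun _ => b) :=
    ⟨fun i => by dsimp [corner]; split_ifs <;> linarith,
      fun i => by dsimp [corner]; split_ifs <;> linarith⟩
  have key : 2 * ∑ i, corner i * w i = (a + b) * ∑ i, w i - (b - a) * ∑ i, |w i| := by
    simp only [Finset.mul_sum, ← Finset.sum_sub_distrib, corner, two_mul_ite_mul_eq]
  linarith [hw corner hcorner]

def polyMul {n : ℕ} (f : (Fin n → Bool) → ℝ) :
    (Finset (Fin n) → ℝ) →ₗ[ℝ] ((Fin n → Bool) → ℝ) where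
  toFun c x := f x * ∑ T, c T * chiT T x
  map_add' c c' := by
    funext x
    simp [add_mul, Finset.sum_add_distrib, mul_add]
  map_smul' r c := by
    funext x
    simp only [Pi.smul_apply, smul_eq_mul, RingHom.id_apply, mul_assoc, ← Finset.mul_sum]
    ring

def lowDegree (n d : ℕ) : Submodule ℝ (Finset (Fin n) → ℝ) :=
  Submodule.pi {T | d < T.card} fun _ => ⊥

theorem mem_lowDegree {n d : ℕ} {c : Finset (Fin n) → ℝ} :
    c ∈ lowDegree n d ↔ ∀ T, d < T.card → c T = 0 := by
  simp [lowDegree, Submodule.mem_pi]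

theorem mul_chiT_mem_map_polyMul {n d : ℕ} (f : (Fin n → Bool) → ℝ) {T : Finset (Fin n)}
    (hT : T.card ≤ d) : (fun x => f x * chiT T x) ∈ (lowDegree n d).map (polyMul f) := by
  classical
  refine ⟨Pi.single T 1, mem_lowDegree.2 fun T' hT' => ?_, ?_⟩
  · exact Pi.single_eq_of_ne (by rintro rfl; omega) _
  · funext x
    simp [polyMul, Pi.single_apply]

/-- If there is no polynomial `g` of degree at most `d` with `1 ≤ f(x)g(x) ≤ α` for all `x`
(for a given `α > 1`), then there is a dual polynomial `v` with: (1) `⟨v, χ_T⟩ = 0` for all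
`|T| ≤ d`, (2) `‖v‖₁ = 1`, and (3) `⟨v, f⟩ ≥ (α−1)/(α+1)`. -/
theorem stmt12 (n d : ℕ) (f : (Fin n → Bool) → ℝ) (hf : ∀ x, f x = 1 ∨ f x = -1)
    (α : ℝ) (hα : 1 < α)
    (h : ¬ ∃ c : Finset (Fin n) → ℝ, (∀ T, d < T.card → c T = 0) ∧
      ∀ x, 1 ≤ f x * (∑ T : Finset (Fin n), c T * chiT T x) ∧
        f x * (∑ T : Finset (Fin n), c T * chiT T x) ≤ α) :
    ∃ v : (Fin n → Bool) → ℝ,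
      (∀ T : Finset (Fin n), T.card ≤ d → ∑ x, v x * chiT T x = 0) ∧
      (∑ x, |v x|) = 1 ∧
      (α - 1) / (α + 1) ≤ ∑ x, v x * f x := by
  have hdisj : Disjoint (Set.Icc (fun _ => 1) (fun _ => α))
      ((lowDegree n d).map (polyMul f) : Set ((Fin n → Bool) → ℝ)) := by
    rw [Set.disjoint_left]
    rintro _ ⟨hlo, hhi⟩ ⟨c, hc, rfl⟩
    exact h ⟨c, mem_lowDegree.1 hc, fun x => ⟨hlo x, hhi x⟩⟩
  obtain ⟨w, horth, hpos⟩ :=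
    exists_orthogonal_weight_of_disjoint_compact (convex_Icc _ _) isCompact_Icc hdisj
  have hbound := sub_mul_sum_abs_lt_add_mul_sum hα.le hpos
  set S := ∑ x, |w x|
  have hS : 0 < S := by
    nlinarith [Finset.sum_le_sum fun x (_ : x ∈ Finset.univ) => le_abs_self (w x)]
  have hf_sq : ∀ x, f x * f x = 1 := fun x => by rcases hf x with h' | h' <;> simp [h']
  have hf_abs : ∀ x, |f x| = 1 := fun x => by rcases hf x with h' | h' <;> simp [h']
  refine ⟨fun x => f x * w x / S, fun T hT => ?_, ?_, ?_⟩
  · calc ∑ x, f x * w x / S * chiT T x = (∑ x, f x * chiT T x * w x) / S := by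
          rw [Finset.sum_div]
          exact Finset.sum_congr rfl fun x _ => by ring
      _ = 0 := by rw [horth _ (mul_chiT_mem_map_polyMul f hT), zero_div]
  · simp only [abs_div, abs_mul, hf_abs, one_mul, abs_of_pos hS, ← Finset.sum_div]
    exact div_self hS.ne'
  · have : ∑ x, f x * w x / S * f x = (∑ x, w x) / S := by
      rw [Finset.sum_div]
      refine Finset.sum_congr rfl fun x _ => ?_
      rw [div_mul_eq_mul_div, mul_right_comm, hf_sq, one_mul]
    rw [this, div_le_div_iff₀ (by linarith) hS]
    linarith
end

section
/- Let f : {-1,1}^n → {-1,1}. If there is no polynomial g of degree at most d with f(x)g(x) ≥ 1 for all x, then there exists v : {-1,1}^n → ℝ with ⟨v, χ_T⟩ = 0 for all |T| ≤ d, ‖v‖₁ = 1, and v(x)f(x) ≥ 0 for all x. -/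
open scoped BigOperators

/-!
The functions `x ↦ f x * χ_T x` with `|T| ≤ d` span a subspace `K` of `ℝ^{±1ⁿ}`. Gordan's
alternative, obtained by separating the standard simplex from the subspace `Kᗮ`, says that either
`K` contains a vector with positive coordinates, which after scaling is `f * g` with `deg g ≤ d`
and `f g ≥ 1`, or `Kᗮ` meets the simplex in some `δ`; in the second case `v = δ * f` is the
dual witness, as `f² = 1`.
-/

theorem StrongDual.apply_eq_zero_of_forall_mem_lt {E : Type*} [TopologicalSpace E]
    [AddCommGroup E] [Module ℝ E] (φ : StrongDual ℝ E) {S : Submodule ℝ E} {b : ℝ}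
    (hb : ∀ y ∈ S, b < φ y) {y : E} (hy : y ∈ S) : φ y = 0 := by
  by_contra hφ
  simpa [hφ] using hb ((b / φ y) • y) (S.smul_mem _ hy)

theorem Submodule.exists_forall_pos_mem_or_exists_mem_orthogonal_stdSimplex {ι : Type*}
    [Fintype ι] (K : Submodule ℝ (EuclideanSpace ℝ ι)) :
    (∃ u ∈ K, ∀ i, 0 < u i) ∨ ∃ δ ∈ Kᗮ, δ.ofLp ∈ stdSimplex ℝ ι := by
  classical
  refine or_iff_not_imp_right.2 fun hdisj => ?_
  let e := PiLp.continuousLinearEquiv 2 ℝ (fun _ : ι => ℝ)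
  obtain ⟨φ, a, b, hφa, hab, hbφ⟩ := geometric_hahn_banach_compact_closed
    ((convex_stdSimplex ℝ ι).linear_preimage e.toLinearMap)
    (e.toHomeomorph.isCompact_preimage.2 (isCompact_stdSimplex ℝ ι))
    Kᗮ.convex K.isClosed_orthogonal
    (Set.disjoint_left.2 fun δ hδ hδK => hdisj ⟨δ, hδK, hδ⟩)
  set w := (InnerProductSpace.toDual ℝ _).symm φ
  have hw : w ∈ K := by
    rw [← K.orthogonal_orthogonal, Submodule.mem_orthogonal]
    intro y hy
    rw [real_inner_comm, InnerProductSpace.toDual_symm_apply]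
    exact φ.apply_eq_zero_of_forall_mem_lt hbφ hy
  have hb : b < 0 := by simpa using hbφ 0 Kᗮ.zero_mem
  refine ⟨-w, K.neg_mem hw, fun i => ?_⟩
  have hi : φ (EuclideanSpace.single i 1) < a := hφa _ (single_mem_stdSimplex ℝ i)
  have : φ (EuclideanSpace.single i 1) = w i := by
    rw [← InnerProductSpace.toDual_symm_apply, EuclideanSpace.inner_single_right]
    simp [w]
  simp only [PiLp.neg_apply]
  linarith

noncomputable def signedCharSpan (n d : ℕ) (f : (Fin n → Bool) → ℝ) :
    Submodule ℝ (EuclideanSpace ℝ (Fin n → Bool)) :=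
  Submodule.span ℝ ((fun T => WithLp.toLp 2 fun x => f x * chiT T x) '' {T | T.card ≤ d})

theorem exists_coeff_of_mem_signedCharSpan {n d : ℕ} {f : (Fin n → Bool) → ℝ}
    {u : EuclideanSpace ℝ (Fin n → Bool)} (hu : u ∈ signedCharSpan n d f) :
    ∃ c : Finset (Fin n) → ℝ, (∀ T, d < T.card → c T = 0) ∧
      ∀ x, u x = f x * ∑ T, c T * chiT T x := by
  obtain ⟨l, hl, rfl⟩ := (Finsupp.mem_span_image_iff_linearCombination ℝ).1 hu
  refine ⟨l, fun T hT => (Finsupp.mem_supported' _ _).1 hl T (by simpa using hT), fun x => ?_⟩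
  simp [Finsupp.linearCombination_apply, Finsupp.sum_fintype, Finset.mul_sum, mul_left_comm]

theorem sum_mul_chiT_eq_zero_of_mem_orthogonal {n d : ℕ} {f : (Fin n → Bool) → ℝ}
    {δ : EuclideanSpace ℝ (Fin n → Bool)} (hδ : δ ∈ (signedCharSpan n d f)ᗮ)
    {T : Finset (Fin n)} (hT : T.card ≤ d) : ∑ x, δ x * f x * chiT T x = 0 := by
  have := (Submodule.mem_orthogonal _ _).1 hδ _ (Submodule.subset_span ⟨T, hT, rfl⟩)
  simpa [PiLp.inner_apply, mul_assoc] using this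

theorem exists_forall_one_le_mul_of_forall_pos {ι : Type*} [Fintype ι] {u : ι → ℝ}
    (hu : ∀ i, 0 < u i) : ∃ s : ℝ, ∀ i, 1 ≤ s * u i := by
  refine ⟨∑ j, (u j)⁻¹, fun i => ?_⟩
  calc 1 = (u i)⁻¹ * u i := (inv_mul_cancel₀ (hu i).ne').symm
    _ ≤ (∑ j, (u j)⁻¹) * u i := mul_le_mul_of_nonneg_right
      (Finset.single_le_sum (fun j _ => (inv_pos.2 (hu j)).le) (Finset.mem_univ i)) (hu i).le

theorem exists_threshold_poly_of_forall_pos_mem_signedCharSpan {n d : ℕ}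
    {f : (Fin n → Bool) → ℝ} {u : EuclideanSpace ℝ (Fin n → Bool)}
    (hu : u ∈ signedCharSpan n d f) (hpos : ∀ x, 0 < u x) :
    ∃ c : Finset (Fin n) → ℝ, (∀ T, d < T.card → c T = 0) ∧
      ∀ x, 1 ≤ f x * ∑ T, c T * chiT T x := by
  obtain ⟨c, hc, hcu⟩ := exists_coeff_of_mem_signedCharSpan hu
  obtain ⟨s, hs⟩ := exists_forall_one_le_mul_of_forall_pos hpos
  refine ⟨s • c, fun T hT => by simp [hc T hT], fun x => ?_⟩
  calc 1 ≤ s * u x := hs x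
    _ = f x * ∑ T, (s • c) T * chiT T x := by
      simp only [hcu, Pi.smul_apply, smul_eq_mul, mul_assoc, ← Finset.mul_sum]
      ring

/-- If there is no polynomial `g` of degree at most `d` with `f(x)g(x) ≥ 1` for all `x`
(i.e. `f` has threshold degree greater than `d`), then there is a dual witness `v` with
`⟨v, χ_T⟩ = 0` for all `|T| ≤ d`, `‖v‖₁ = 1`, and `v(x)f(x) ≥ 0` for all `x`. -/
theorem stmt13 (n d : ℕ) (f : (Fin n → Bool) → ℝ) (hf : ∀ x, f x = 1 ∨ f x = -1)
    (h : ¬ ∃ c : Finset (Fin n) → ℝ, (∀ T, d < T.card → c T = 0) ∧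
      ∀ x, 1 ≤ f x * (∑ T : Finset (Fin n), c T * chiT T x)) :
    ∃ v : (Fin n → Bool) → ℝ,
      (∀ T : Finset (Fin n), T.card ≤ d → ∑ x, v x * chiT T x = 0) ∧
      (∑ x, |v x|) = 1 ∧
      (∀ x, 0 ≤ v x * f x) := by
  obtain ⟨u, hu, hpos⟩ | ⟨δ, hδ, hδnn, hδsum⟩ :=
    (signedCharSpan n d f).exists_forall_pos_mem_or_exists_mem_orthogonal_stdSimplex
  · exact (h (exists_threshold_poly_of_forall_pos_mem_signedCharSpan hu hpos)).elim
  have hf_abs : ∀ x, |f x| = 1 := fun x => by rcases hf x with hx | hx <;> simp [hx]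
  have hf_sq : ∀ x, f x * f x = 1 := fun x => by rcases hf x with hx | hx <;> simp [hx]
  refine ⟨fun x => δ x * f x, fun T hT => sum_mul_chiT_eq_zero_of_mem_orthogonal hδ hT, ?_,
    fun x => ?_⟩
  · simpa [abs_mul, hf_abs, abs_of_nonneg (hδnn _)] using hδsum
  · simpa [mul_assoc, hf_sq] using hδnn x
end

section
/- The (k, M, OR_m) pattern tensor is a subtensor of the k-party set-intersection tensor on n' = m·M^{k−1} bits: there is an injection mapping each index tuple (x, y₁,...,y_{k−1}) of the pattern tensor to inputs (x, z₁,...,z_{k−1}) ∈ ({-1,1}^{n'})^k such that OR_{n'}(x ∧ z₁ ∧ ... ∧ z_{k−1}) equals the pattern tensor entry OR_m applied blockwise. -/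
section CoordIndicator

variable {κ ι α : Type*} [DecidableEq α]

/-- The paper's `z_j`: in block `i` the indicator of the hyperplane `t j = y j i`, so that
`z_1 ∧ ⋯ ∧ z_{k-1}` marks exactly the position `(y 1 i, …, y (k-1) i)` of each block. -/
def coordIndicator (y : κ → ι → α) (j : κ) (i : ι) (t : κ → α) : Bool :=
  decide (t j = y j i)

theorem forall_coordIndicator_iff {y : κ → ι → α} {i : ι} {t : κ → α} :
    (∀ j, coordIndicator y j i t = true) ↔ t = fun j => y j i := by
  simp only [coordIndicator, decide_eq_true_eq, funext_iff]

theorem coordIndicator_injective : Function.Injective (coordIndicator : (κ → ι → α) → _) := by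
  intro y y' h
  funext j i
  simpa [coordIndicator] using congrFun (congrFun (congrFun h j) i) (fun j => y j i)

theorem exists_and_forall_coordIndicator_iff (x : ι → (κ → α) → Bool) (y : κ → ι → α) :
    (∃ i t, x i t = true ∧ ∀ j, coordIndicator y j i t = true) ↔
      ∃ i, x i (fun j => y j i) = true := by
  simp only [forall_coordIndicator_iff, exists_eq_right]

end CoordIndicator

theorem stmt19_general (k1 m M : ℕ) :
    ∃ Z : (Fin k1 → Fin m → Fin M) → Fin k1 → (Fin m → (Fin k1 → Fin M) → Bool),
      Function.Injective
        (fun p : (Fin m → (Fin k1 → Fin M) → Bool) × (Fin k1 → Fin m → Fin M) =>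
          (p.1, Z p.2)) ∧
      ∀ (x : Fin m → (Fin k1 → Fin M) → Bool) (y : Fin k1 → Fin m → Fin M),
        ((∃ (i : Fin m) (t : Fin k1 → Fin M), x i t = true ∧ ∀ j, Z y j i t = true) ↔
          ∃ i : Fin m, x i (fun j => y j i) = true) :=
  ⟨coordIndicator, Function.injective_id.prodMap coordIndicator_injective,
    exists_and_forall_coordIndicator_iff⟩

/-- The `(k, M, OR_m)` pattern tensor is a subtensor of the `k`-party set-intersection
tensor on `n' = m·M^{k−1}` bits (here `k1 = k−1`, bit strings of length `n'` are indexed by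
a block `i ∈ [m]` and a position `t ∈ [M]^{k−1}`, and `true` plays the role of `−1`):
there is a map `y ↦ (z₁,…,z_{k−1})` such that `(x, y) ↦ (x, z₁,…,z_{k−1})` is injective and
`OR_{n'}(x ∧ z₁ ∧ … ∧ z_{k−1})` equals the pattern tensor entry `OR_m` applied blockwise,
i.e. `OR_m(x^1[y₁[1],…,y_{k−1}[1]], …, x^m[y₁[m],…,y_{k−1}[m]])`. -/
theorem stmt19 (k1 m M : ℕ) (hM : 0 < M) :
    ∃ Z : (Fin k1 → Fin m → Fin M) → Fin k1 → (Fin m → (Fin k1 → Fin M) → Bool),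
      Function.Injective
        (fun p : (Fin m → (Fin k1 → Fin M) → Bool) × (Fin k1 → Fin m → Fin M) =>
          (p.1, Z p.2)) ∧
      ∀ (x : Fin m → (Fin k1 → Fin M) → Bool) (y : Fin k1 → Fin m → Fin M),
        ((∃ (i : Fin m) (t : Fin k1 → Fin M), x i t = true ∧ ∀ j, Z y j i t = true) ↔
          ∃ i : Fin m, x i (fun j => y j i) = true) :=
  stmt19_general k1 m M
end
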